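/- Consider f_ε(x,y,z) = x^{p_x} + z^{p_z} + x y^{p_y} + ε·y^{p_y+1} with integers p_x > p_y + 1 and p_z > p_y + 1, and weights ω_x = 1/p_x, ω_y = (1 − 1/p_x)/p_y, ω_z = 1/p_z (so f₀ is weighted homogeneous of weight 1 and the perturbation y^{p_y+1} has weight > 1). The arc γ₀(t) = (0,t,0) lies in V(f₀), but for ε ≠ 0 there is no real-analytic arc of the form γ_ε(t) = (t^{d_x}·a(t), t, t^{d_z}·b(t)) with d_x, d_z > 1 and a,b analytic, such that f_ε(γ_ε(t)) ≡ 0. -/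

import Mathlib

/-!
Every term of `f_ε(γ_ε(t))` other than `ε t^{p_y+1}` is divisible by `t^{p_y+2}`, so for `t > 0`
the equation `f_ε(γ_ε(t)) = 0` becomes `ε + t h(t) = 0` with `h` continuous at `0`;
letting `t → 0⁺` forces `ε = 0`.
-/

open Filter Topology

theorem pow_mul_eq_pow_succ_mul {R : Type*} [CommMonoid R] {m n : ℕ} (hm : n + 2 ≤ m) (t x : R) :
    t ^ m * x = t ^ (n + 1) * (t * (t ^ (m - (n + 2)) * x)) := by
  rw [← pow_mul_pow_sub t hm, pow_succ t (n + 1), mul_assoc, mul_assoc]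

theorem eq_zero_of_forall_pos_pow_mul_add_mul_eq_zero {g : ℝ → ℝ} (hg : ContinuousAt g 0)
    {n : ℕ} {c t₀ : ℝ} (ht₀ : 0 < t₀)
    (h : ∀ t, 0 < t → t < t₀ → t ^ n * (c + t * g t) = 0) : c = 0 := by
  have hlim : Tendsto (fun t => c + t * g t) (𝓝[>] 0) (𝓝 c) := by
    have : ContinuousAt (fun t => c + t * g t) 0 := by fun_prop
    simpa using this.tendsto.mono_left nhdsWithin_le_nhds
  have hzero : (fun t => c + t * g t) =ᶠ[𝓝[>] 0] fun _ => 0 := by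
    filter_upwards [Ioo_mem_nhdsGT ht₀] with t ⟨ht, ht'⟩
    exact (mul_eq_zero.mp (h t ht ht')).resolve_left (pow_ne_zero _ ht.ne')
  exact tendsto_nhds_unique hlim (tendsto_const_nhds.congr' hzero.symm)

theorem stmt8_general (px py pz : ℕ)
    (hpx : py + 1 < px) (hpz : py + 1 < pz) (ε : ℝ) (hε : ε ≠ 0) :
    ¬ ∃ (dx dz : ℕ) (a b : ℝ → ℝ) (t₀ : ℝ),
        1 < dx ∧ 1 < dz ∧ AnalyticAt ℝ a 0 ∧ AnalyticAt ℝ b 0 ∧ 0 < t₀ ∧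
        ∀ t : ℝ, 0 ≤ t → t < t₀ →
          (t ^ dx * a t) ^ px + (t ^ dz * b t) ^ pz
            + (t ^ dx * a t) * t ^ py + ε * t ^ (py + 1) = 0 := by
  rintro ⟨dx, dz, a, b, t₀, hdx, hdz, ha, hb, ht₀, heq⟩
  have hax : py + 2 ≤ dx * px := by nlinarith
  have hbz : py + 2 ≤ dz * pz := by nlinarith
  have hay : py + 2 ≤ dx + py := by omega
  set h : ℝ → ℝ := fun t => t ^ (dx * px - (py + 2)) * a t ^ px
    + t ^ (dz * pz - (py + 2)) * b t ^ pz + t ^ (dx + py - (py + 2)) * a t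
  have hh : ContinuousAt h 0 := by
    have := ha.continuousAt
    have := hb.continuousAt
    fun_prop
  have hfactor : ∀ t, (t ^ dx * a t) ^ px + (t ^ dz * b t) ^ pz + (t ^ dx * a t) * t ^ py
      + ε * t ^ (py + 1) = t ^ (py + 1) * (ε + t * h t) := fun t => by
    rw [mul_pow, mul_pow, ← pow_mul, ← pow_mul, mul_right_comm, ← pow_add,
      pow_mul_eq_pow_succ_mul hax, pow_mul_eq_pow_succ_mul hbz, pow_mul_eq_pow_succ_mul hay]
    ring
  refine hε (eq_zero_of_forall_pos_pow_mul_add_mul_eq_zero (n := py + 1) hh ht₀ fun t ht htt => ?_)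
  rw [← hfactor, heq t ht.le htt]

/-- Brianc̨on–Speder-type obstruction: for `f_ε(x,y,z) = x^{p_x} + z^{p_z} + x y^{p_y} + ε y^{p_y+1}`
with `p_x, p_z > p_y + 1` and `ε ≠ 0`, there is no real-analytic arc
`γ_ε(t) = (t^{d_x} a(t), t, t^{d_z} b(t))` with `d_x, d_z > 1` lying in `V(f_ε)`. -/
theorem stmt8 (px py pz : ℕ) (hpx2 : 2 ≤ px) (hpy2 : 2 ≤ py) (hpz2 : 2 ≤ pz)
    (hpx : py + 1 < px) (hpz : py + 1 < pz) (ε : ℝ) (hε : ε ≠ 0) :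
    ¬ ∃ (dx dz : ℕ) (a b : ℝ → ℝ) (t₀ : ℝ),
        1 < dx ∧ 1 < dz ∧ AnalyticAt ℝ a 0 ∧ AnalyticAt ℝ b 0 ∧ 0 < t₀ ∧
        ∀ t : ℝ, 0 ≤ t → t < t₀ →
          (t ^ dx * a t) ^ px + (t ^ dz * b t) ^ pz
            + (t ^ dx * a t) * t ^ py + ε * t ^ (py + 1) = 0 :=
  stmt8_general px py pz hpx hpz ε hε
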